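/- A multiset of vertices in {0,1}^n with multiplicity function f : {0,1}^n → ℕ is an orthogonal array OA(N,n,2,t) if and only if its Fourier coefficients f̂(y) = 2^{-n} Σ_{x ∈ {0,1}^n} f(x) (-1)^{⟨y,x⟩} satisfy f̂(0̄) = N/2^n and f̂(y) = 0 for all y with 1 ≤ wt(y) ≤ t. -/
import Mathlib

private lemma fin2_or (a : Fin 2) : a = 0 ∨ a = 1 := by revert a; decide

private lemma E_congr {n : ℕ} (s : Finset (Fin n)) (y x g : Fin n → Fin 2)
    (hy : Finset.univ.filter (fun i => y i = 1) ⊆ s) (hxg : ∀ i ∈ s, x i = g i) :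
    (∑ i, (y i).val * (x i).val) = ∑ i, (y i).val * (g i).val := by
  apply Finset.sum_congr rfl
  intro i _
  rcases fin2_or (y i) with h | h
  · rw [h]; simp
  · have : i ∈ s := hy (Finset.mem_filter.mpr ⟨Finset.mem_univ i, h⟩)
    rw [hxg i this]

private lemma chi_flip {n : ℕ} (y g : Fin n → Fin 2) (i0 : Fin n) (hy : y i0 = 1) :
    ((-1 : ℝ)) ^ (∑ i, (y i).val * ((Function.update g i0 (g i0 + 1)) i).val)
      = - (-1 : ℝ) ^ (∑ i, (y i).val * (g i).val) := by
  rw [← Finset.sum_erase_add Finset.univ _ (Finset.mem_univ i0),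
      ← Finset.sum_erase_add Finset.univ (fun i => (y i).val * (g i).val) (Finset.mem_univ i0)]
  have herase : ∑ i ∈ Finset.univ.erase i0, (y i).val * ((Function.update g i0 (g i0 + 1)) i).val
      = ∑ i ∈ Finset.univ.erase i0, (y i).val * (g i).val := by
    apply Finset.sum_congr rfl
    intro i hi
    rw [Function.update_of_ne (Finset.ne_of_mem_erase hi)]
  rw [herase, Function.update_self, hy]
  rcases fin2_or (g i0) with h | h <;> rw [h] <;> simp [pow_succ]

private lemma fixed_char_sum {n : ℕ} (s : Finset (Fin n)) (y : Fin n → Fin 2) (i0 : Fin n)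
    (hi0 : i0 ∈ s) (hy : y i0 = 1) :
    ∑ g ∈ Finset.univ.filter
        (fun g : Fin n → Fin 2 => (fun i => if i ∈ s then g i else 0) = g),
      ((-1 : ℝ)) ^ (∑ i, (y i).val * (g i).val) = 0 := by
  have hmem : ∀ a : Fin n → Fin 2,
      a ∈ Finset.univ.filter (fun g : Fin n → Fin 2 => (fun i => if i ∈ s then g i else 0) = g) →
      Function.update a i0 (a i0 + 1) ∈ Finset.univ.filter
        (fun g : Fin n → Fin 2 => (fun i => if i ∈ s then g i else 0) = g) := by
    intro a ha
    simp only [Finset.mem_filter, Finset.mem_univ, true_and] at ha ⊢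
    funext i
    by_cases hi : i = i0
    · subst hi; rw [if_pos hi0]
    · rw [Function.update_of_ne hi]
      by_cases his : i ∈ s
      · rw [if_pos his]
      · rw [if_neg his]
        have := congrFun ha i
        simpa [his] using this
  refine Finset.sum_involution (fun g _ => Function.update g i0 (g i0 + 1)) ?_ ?_
    (fun a ha => hmem a ha) ?_
  · intro a _
    rw [chi_flip y a i0 hy]; ring
  · intro a _ _ h
    have h2 := congrFun h i0
    simp only [Function.update_self] at h2
    have h3 : ∀ b : Fin 2, b + 1 ≠ b := by decide
    exact h3 (a i0) h2
  · intro a _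
    simp only [Function.update_idem, Function.update_self]
    have h4 : ∀ b : Fin 2, b + 1 + 1 = b := by decide
    rw [h4]
    exact Function.update_eq_self i0 a

private lemma prod_ind {n : ℕ} (s : Finset (Fin n)) (x g : Fin n → Fin 2) :
    ∏ i ∈ s, (1 + (-1 : ℝ) ^ ((x i).val + (g i).val))
      = if (∀ i ∈ s, x i = g i) then (2 : ℝ) ^ s.card else 0 := by
  split_ifs with h
  · have : ∀ i ∈ s, (1 + (-1 : ℝ) ^ ((x i).val + (g i).val)) = 2 := by
      intro i hi
      rw [h i hi]
      rw [Even.neg_one_pow ⟨(g i).val, rfl⟩]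
      norm_num
    rw [Finset.prod_congr rfl this, Finset.prod_const]
  · push_neg at h
    obtain ⟨i, hi, hne⟩ := h
    apply Finset.prod_eq_zero hi
    have : (x i).val + (g i).val = 1 := by
      have : ∀ a b : Fin 2, a ≠ b → a.val + b.val = 1 := by decide
      exact this _ _ hne
    rw [this]
    norm_num

private lemma expand_ind {n : ℕ} (s : Finset (Fin n)) (x g : Fin n → Fin 2) :
    ∏ i ∈ s, (1 + (-1 : ℝ) ^ ((x i).val + (g i).val))
      = ∑ u ∈ s.powerset, (-1 : ℝ) ^ (∑ i ∈ u, ((x i).val + (g i).val)) := by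
  have : ∀ i ∈ s, (1 + (-1 : ℝ) ^ ((x i).val + (g i).val))
      = ((-1 : ℝ) ^ ((x i).val + (g i).val) + 1) := fun i _ => by ring
  rw [Finset.prod_congr rfl this, Finset.prod_add]
  apply Finset.sum_congr rfl
  intro u _
  rw [Finset.prod_const_one, mul_one, Finset.prod_pow_eq_pow_sum]

/-- Fourier coefficient of a multiplicity function on {0,1}^n. -/
noncomputable def fhat {n : ℕ} (f : (Fin n → Fin 2) → ℕ) (y : Fin n → Fin 2) : ℝ :=
  (∑ x : Fin n → Fin 2, (f x : ℝ) * (-1) ^ (∑ i, (y i).val * (x i).val)) / 2 ^ n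

/-- Hamming weight of a binary word. -/
def wt {n : ℕ} (x : Fin n → Fin 2) : ℕ :=
  (Finset.univ.filter (fun i => x i = 1)).card

/-- A multiset with multiplicity function f is an OA(N,n,2,t) iff its Fourier
coefficients satisfy f̂(0̄) = N/2^n and f̂(y) = 0 for all 1 ≤ wt(y) ≤ t. -/
theorem stmt_11 (n t N : ℕ) (htn : t ≤ n) (f : (Fin n → Fin 2) → ℕ) :
    ((∑ x : Fin n → Fin 2, f x = N) ∧
      ∀ s : Finset (Fin n), s.card = t → ∀ g : Fin n → Fin 2,
        (∑ x ∈ Finset.univ.filter (fun x : Fin n → Fin 2 => ∀ i ∈ s, x i = g i), f x)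
          * 2 ^ t = N)
    ↔ (fhat f (fun _ => 0) = N / 2 ^ n ∧
       ∀ y : Fin n → Fin 2, 1 ≤ wt y → wt y ≤ t → fhat f y = 0) := by
  classical
  have h2n : (2 : ℝ) ^ n ≠ 0 := by positivity
  have h2t : (2 : ℝ) ^ t ≠ 0 := by positivity
  have hzero : ∀ x : Fin n → Fin 2,
      (∑ i, (((fun _ => (0 : Fin 2)) i)).val * (x i).val) = 0 := by
    intro x; simp
  constructor
  · rintro ⟨hN, hOA⟩
    constructor
    · unfold fhat
      rw [Finset.sum_congr rfl (fun x _ => by rw [hzero x, pow_zero, mul_one])]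
      rw [show (∑ x : Fin n → Fin 2, (f x : ℝ)) = (N : ℝ) by exact_mod_cast congrArg Nat.cast hN]
    · intro y h1 h2
      have hne : (Finset.univ.filter (fun i => y i = 1)).Nonempty :=
        Finset.card_pos.mp (by unfold wt at h1; omega)
      obtain ⟨i0, hi0f⟩ := hne
      have hi0y : y i0 = 1 := (Finset.mem_filter.mp hi0f).2
      obtain ⟨s, hsub, hcard⟩ :=
        Finset.exists_superset_card_eq (s := Finset.univ.filter (fun i => y i = 1)) (n := t)
          (by unfold wt at h2; exact h2) (by simpa using htn)
      have hi0s : i0 ∈ s := hsub hi0f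
      set π : (Fin n → Fin 2) → (Fin n → Fin 2) := fun x i => if i ∈ s then x i else 0 with hπ
      unfold fhat
      rw [div_eq_zero_iff]; left
      rw [← Finset.sum_fiberwise Finset.univ π
        (fun x => (f x : ℝ) * (-1) ^ (∑ i, (y i).val * (x i).val))]
      have hfib : ∀ g : Fin n → Fin 2,
          (∑ x ∈ Finset.univ.filter (fun x => π x = g),
            (f x : ℝ) * (-1) ^ (∑ i, (y i).val * (x i).val))
          = if π g = g then ((-1 : ℝ) ^ (∑ i, (y i).val * (g i).val)) * ((N : ℝ) / 2 ^ t)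
            else 0 := by
        intro g
        by_cases hg : π g = g
        · rw [if_pos hg]
          have hfilter : Finset.univ.filter (fun x => π x = g)
              = Finset.univ.filter (fun x : Fin n → Fin 2 => ∀ i ∈ s, x i = g i) := by
            ext x
            simp only [Finset.mem_filter, Finset.mem_univ, true_and]
            constructor
            · intro h i hi
              rw [← h]
              simp [hπ, hi]
            · intro h
              funext i
              by_cases hi : i ∈ s
              · simp [hπ, hi, h i hi]
              · have hgz := congrFun hg i
                simp only [hπ, if_neg hi] at hgz ⊢
                exact hgz
          rw [hfilter]
          have hcongr : ∀ x ∈ Finset.univ.filter (fun x : Fin n → Fin 2 => ∀ i ∈ s, x i = g i),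
              (f x : ℝ) * (-1) ^ (∑ i, (y i).val * (x i).val)
              = (-1 : ℝ) ^ (∑ i, (y i).val * (g i).val) * (f x : ℝ) := by
            intro x hx
            rw [E_congr s y x g hsub (Finset.mem_filter.mp hx).2]
            ring
          rw [Finset.sum_congr rfl hcongr, ← Finset.mul_sum]
          congr 1
          rw [eq_div_iff h2t]
          exact_mod_cast congrArg Nat.cast (hOA s hcard g)
        · rw [if_neg hg]
          have hempty : Finset.univ.filter (fun x => π x = g) = ∅ := by
            rw [Finset.filter_eq_empty_iff]
            intro x _ h
            apply hg
            rw [← h]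
            funext i
            by_cases hi : i ∈ s <;> simp [hπ, hi]
          rw [hempty, Finset.sum_empty]
      rw [Finset.sum_congr rfl (fun g _ => hfib g), ← Finset.sum_filter, ← Finset.sum_mul]
      rw [fixed_char_sum s y i0 hi0s hi0y, zero_mul]
  · rintro ⟨h0, hvan⟩
    have hsum : (∑ x : Fin n → Fin 2, (f x : ℝ)) = (N : ℝ) := by
      unfold fhat at h0
      rw [Finset.sum_congr rfl (fun x _ => by rw [hzero x, pow_zero, mul_one])] at h0
      field_simp at h0
      exact h0
    have hNnat : (∑ x : Fin n → Fin 2, f x) = N := by exact_mod_cast hsum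
    refine ⟨hNnat, ?_⟩
    intro s hs g
    have hT : ∀ u ∈ s.powerset, u ≠ ∅ →
        (∑ x : Fin n → Fin 2, (f x : ℝ) * (-1) ^ (∑ i ∈ u, (x i).val)) = 0 := by
      intro u hu hune
      set y : Fin n → Fin 2 := fun i => if i ∈ u then 1 else 0 with hy
      have hwt : wt y = u.card := by
        unfold wt
        congr 1
        ext i
        simp only [Finset.mem_filter, Finset.mem_univ, true_and, hy]
        by_cases hi : i ∈ u <;> simp [hi]
      have h1 : 1 ≤ wt y := by
        rw [hwt]
        exact Finset.card_pos.mpr (Finset.nonempty_iff_ne_empty.mpr hune)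
      have h2 : wt y ≤ t := by
        rw [hwt]
        exact le_trans (Finset.card_le_card (Finset.mem_powerset.mp hu)) (le_of_eq hs)
      have hv := hvan y h1 h2
      unfold fhat at hv
      rw [div_eq_zero_iff] at hv
      rcases hv with hv | hv
      · rw [← hv]
        apply Finset.sum_congr rfl
        intro x _
        congr 2
        rw [← Finset.sum_subset (Finset.subset_univ u) (fun i _ hi => by simp [hy, hi])]
        apply Finset.sum_congr rfl
        intro i hi
        simp [hy, hi]
      · exact absurd hv h2n
    have key : (∑ x ∈ Finset.univ.filter (fun x : Fin n → Fin 2 => ∀ i ∈ s, x i = g i),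
        (f x : ℝ)) * 2 ^ t = (N : ℝ) := by
      calc (∑ x ∈ Finset.univ.filter (fun x : Fin n → Fin 2 => ∀ i ∈ s, x i = g i),
              (f x : ℝ)) * 2 ^ t
          = ∑ x : Fin n → Fin 2,
              (f x : ℝ) * (if (∀ i ∈ s, x i = g i) then (2 : ℝ) ^ t else 0) := by
            rw [Finset.sum_mul, Finset.sum_filter]
            apply Finset.sum_congr rfl
            intro x _
            by_cases h : ∀ i ∈ s, x i = g i <;> simp [h]
        _ = ∑ x : Fin n → Fin 2,
              (f x : ℝ) * ∏ i ∈ s, (1 + (-1 : ℝ) ^ ((x i).val + (g i).val)) := by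
            apply Finset.sum_congr rfl
            intro x _
            rw [prod_ind, hs]
        _ = ∑ x : Fin n → Fin 2, ∑ u ∈ s.powerset,
              ((f x : ℝ) * (-1) ^ (∑ i ∈ u, (x i).val)) * (-1) ^ (∑ i ∈ u, (g i).val) := by
            apply Finset.sum_congr rfl
            intro x _
            rw [expand_ind, Finset.mul_sum]
            apply Finset.sum_congr rfl
            intro u _
            rw [Finset.sum_add_distrib, pow_add]
            ring
        _ = ∑ u ∈ s.powerset,
              (∑ x : Fin n → Fin 2, (f x : ℝ) * (-1) ^ (∑ i ∈ u, (x i).val))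
                * (-1) ^ (∑ i ∈ u, (g i).val) := by
            rw [Finset.sum_comm]
            apply Finset.sum_congr rfl
            intro u _
            rw [Finset.sum_mul]
        _ = (N : ℝ) := by
            rw [Finset.sum_eq_single_of_mem ∅ (Finset.empty_mem_powerset s)
              (fun u hu hune => by rw [hT u hu hune, zero_mul])]
            simp [hsum]
    have : ((∑ x ∈ Finset.univ.filter (fun x : Fin n → Fin 2 => ∀ i ∈ s, x i = g i), f x)
        * 2 ^ t : ℝ) = (N : ℝ) := by push_cast; exact key
    exact_mod_cast this
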